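/- arXiv:2412.06380 — 7 statements merged into one kernel-verified Lean document; each statement's English description precedes it below -/
import Mathlib

section
/- The dual cone of C = {x ∈ ℝ^r_+ : eᵀx ≥ √(r-1)·‖x‖₂} is C* = {y ∈ ℝ^r : eᵀy ≥ ‖y‖₂}. -/
/-!
Both cones are circular cones around `e`: `C = {x | a ‖x‖ ≤ ⟪e, x⟫}` with `a = √(r - 1)` (the
constraint `x ≥ 0` is implied) and the claimed dual is `{y | b ‖y‖ ≤ ⟪e, y⟫}` with `b = 1`, where
`a² + b² = ‖e‖²`. In any real inner product space, two such cones around `v` with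
`a² + b² = ‖v‖²` are dual to each other. Writing `x` and `y` as components along `v` plus
components orthogonal to `v`, the cone conditions bound the orthogonal components so that
Cauchy–Schwarz gives `⟪x, y⟫ ≥ 0`. Conversely, if `y` is in the dual, test it against the
boundary ray of the first cone in the plane of `v` and `y`, on the side of `v` away from `y`.
-/

open RealInnerProductSpace WithLp

theorem mul_le_mul_of_weighted_le {A B X Y s t : ℝ} (hA : 0 ≤ A) (hB : 0 ≤ B) (hAB : 0 < A + B)
    (hX : 0 ≤ X) (hY : 0 ≤ Y) (hs : 0 ≤ s) (ht : 0 ≤ t) (hXs : A * X ≤ B * s)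
    (hYt : B * Y ≤ A * t) :
    X * Y ≤ s * t := by
  refine le_of_mul_le_mul_left ?_ (pow_pos hAB 2)
  nlinarith [mul_le_mul_of_nonneg_right hXs (mul_nonneg hA hY),
    mul_le_mul_of_nonneg_right hYt (mul_nonneg hA hs),
    mul_le_mul_of_nonneg_right hXs (mul_nonneg hB hY),
    mul_le_mul_of_nonneg_left hYt (mul_nonneg hB hs),
    mul_le_mul_of_nonneg_right hYt (mul_nonneg hB hX),
    mul_le_mul_of_nonneg_right hXs (mul_nonneg hB ht)]

section CircularCone

variable {E : Type*} [NormedAddCommGroup E] [InnerProductSpace ℝ E]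

/-- Cauchy–Schwarz for the components of `x` and `y` orthogonal to `v`, scaled by `‖v‖²`. -/
theorem sq_norm_sq_mul_inner_sub_le (v x y : E) :
    (‖v‖ ^ 2 * ⟪x, y⟫ - ⟪v, x⟫ * ⟪v, y⟫) ^ 2 ≤
      (‖v‖ ^ 2 * ‖x‖ ^ 2 - ⟪v, x⟫ ^ 2) * (‖v‖ ^ 2 * ‖y‖ ^ 2 - ⟪v, y⟫ ^ 2) := by
  rcases eq_or_ne v 0 with rfl | hv
  · simp
  have hcs := real_inner_mul_inner_self_le (‖v‖ ^ 2 • x - ⟪v, x⟫ • v) (‖v‖ ^ 2 • y - ⟪v, y⟫ • v)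
  simp only [inner_sub_left, inner_sub_right, real_inner_smul_left, real_inner_smul_right,
    real_inner_comm v] at hcs
  rw [real_inner_self_eq_norm_sq, real_inner_self_eq_norm_sq, real_inner_self_eq_norm_sq] at hcs
  have hv4 : 0 < (‖v‖ ^ 2) ^ 2 := by positivity
  refine le_of_mul_le_mul_left ?_ hv4
  linear_combination hcs

theorem sq_inner_le_norm_sq_mul_norm_sq (v x : E) : ⟪v, x⟫ ^ 2 ≤ ‖v‖ ^ 2 * ‖x‖ ^ 2 := by
  rw [← mul_pow]
  exact sq_le_sq' (neg_le_of_abs_le (abs_real_inner_le_norm v x)) (real_inner_le_norm v x)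

variable {v : E} {a b : ℝ}

theorem inner_nonneg_of_mul_norm_le_inner (hv : v ≠ 0) (ha : 0 ≤ a) (hb : 0 ≤ b)
    (hab : a ^ 2 + b ^ 2 = ‖v‖ ^ 2) {x y : E} (hx : a * ‖x‖ ≤ ⟪v, x⟫) (hy : b * ‖y‖ ≤ ⟪v, y⟫) :
    0 ≤ ⟪x, y⟫ := by
  have hp : 0 ≤ ⟪v, x⟫ := (mul_nonneg ha (norm_nonneg x)).trans hx
  have hP : 0 ≤ ⟪v, y⟫ := (mul_nonneg hb (norm_nonneg y)).trans hy
  have hX := sq_inner_le_norm_sq_mul_norm_sq v x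
  have hY := sq_inner_le_norm_sq_mul_norm_sq v y
  have hx2 : a ^ 2 * (‖v‖ ^ 2 * ‖x‖ ^ 2 - ⟪v, x⟫ ^ 2) ≤ b ^ 2 * ⟪v, x⟫ ^ 2 := by
    linear_combination ‖v‖ ^ 2 * pow_le_pow_left₀ (by positivity) hx 2 - ⟪v, x⟫ ^ 2 * hab
  have hy2 : b ^ 2 * (‖v‖ ^ 2 * ‖y‖ ^ 2 - ⟪v, y⟫ ^ 2) ≤ a ^ 2 * ⟪v, y⟫ ^ 2 := by
    linear_combination ‖v‖ ^ 2 * pow_le_pow_left₀ (by positivity) hy 2 - ⟪v, y⟫ ^ 2 * hab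
  have hprod := mul_le_mul_of_weighted_le (sq_nonneg a) (sq_nonneg b) (hab ▸ by positivity)
    (sub_nonneg.2 hX) (sub_nonneg.2 hY) (sq_nonneg _) (sq_nonneg _) hx2 hy2
  have hcs := (sq_norm_sq_mul_inner_sub_le v x y).trans (hprod.trans_eq (mul_pow _ _ 2).symm)
  have hlow := (abs_le_of_sq_le_sq' hcs (mul_nonneg hp hP)).1
  exact nonneg_of_mul_nonneg_right (by linarith) (by positivity : 0 < ‖v‖ ^ 2)

theorem mul_norm_le_inner_of_forall_inner_nonneg (hv : v ≠ 0) (ha : 0 ≤ a) (hb : 0 ≤ b)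
    (hab : a ^ 2 + b ^ 2 = ‖v‖ ^ 2) {y : E} (hy : ∀ x, a * ‖x‖ ≤ ⟪v, x⟫ → 0 ≤ ⟪x, y⟫) :
    b * ‖y‖ ≤ ⟪v, y⟫ := by
  have hv2 : 0 < ‖v‖ := norm_pos_iff.2 hv
  have hav : a ≤ ‖v‖ := abs_le_of_sq_le_sq' (by nlinarith) hv2.le |>.2
  have hP : 0 ≤ ⟪v, y⟫ := hy v <| by
    rw [real_inner_self_eq_norm_sq, sq]; exact mul_le_mul_of_nonneg_right hav hv2.le
  set z := ‖v‖ ^ 2 • y - ⟪v, y⟫ • v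
  have hvz : ⟪v, z⟫ = 0 := by
    simp only [z, inner_sub_right, real_inner_smul_right, real_inner_self_eq_norm_sq]; ring
  have hzy : ⟪z, y⟫ = ‖v‖ ^ 2 * ‖y‖ ^ 2 - ⟪v, y⟫ ^ 2 := by
    simp only [z, inner_sub_left, real_inner_smul_left, real_inner_self_eq_norm_sq]; ring
  have hz : ‖z‖ ^ 2 = ‖v‖ ^ 2 * ⟪z, y⟫ := by
    rw [← real_inner_self_eq_norm_sq]
    nth_rewrite 1 [show z = ‖v‖ ^ 2 • y - ⟪v, y⟫ • v from rfl]
    rw [inner_sub_left, real_inner_smul_left, real_inner_smul_left, real_inner_comm, hvz]; ring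
  -- `z` is the component of `y` orthogonal to `v`, and `x` spans the boundary ray of the
  -- `a`-cone on the side of `v` away from `z`.
  set x := (a * ‖z‖) • v - (b * ‖v‖) • z
  have hvx : ⟪v, x⟫ = a * ‖v‖ ^ 2 * ‖z‖ := by
    simp only [x, inner_sub_right, real_inner_smul_right, real_inner_self_eq_norm_sq, hvz]; ring
  have hx : ‖x‖ = ‖v‖ ^ 2 * ‖z‖ := by
    refine (mul_self_inj (norm_nonneg _) (by positivity)).1 ?_
    rw [norm_sub_sq_eq_norm_sq_add_norm_sq_real
        (by rw [real_inner_smul_left, real_inner_smul_right, hvz, mul_zero, mul_zero]),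
      norm_smul, norm_smul, Real.norm_of_nonneg (by positivity),
      Real.norm_of_nonneg (by positivity)]
    linear_combination (‖v‖ ^ 2 * ‖z‖ ^ 2) * hab
  have hxy : ‖v‖ * ⟪x, y⟫ = ‖z‖ * (a * ‖v‖ * ⟪v, y⟫ - b * ‖z‖) := by
    simp only [x, inner_sub_left, real_inner_smul_left]
    linear_combination b * hz
  have hbz : b * ‖z‖ ≤ a * ‖v‖ * ⟪v, y⟫ := by
    rcases (norm_nonneg z).eq_or_lt with hz0 | hz0
    · rw [← hz0, mul_zero]; positivity
    · have := hy x (le_of_eq (by rw [hx, hvx]; ring))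
      have : 0 ≤ ‖z‖ * (a * ‖v‖ * ⟪v, y⟫ - b * ‖z‖) := hxy ▸ mul_nonneg hv2.le this
      linarith [nonneg_of_mul_nonneg_right this hz0]
  have hsq : (‖v‖ ^ 2) ^ 2 * (b * ‖y‖) ^ 2 ≤ (‖v‖ ^ 2) ^ 2 * ⟪v, y⟫ ^ 2 := by
    have := pow_le_pow_left₀ (by positivity) hbz 2
    rw [mul_pow, hz, hzy] at this
    linear_combination this + (‖v‖ ^ 2 * ⟪v, y⟫ ^ 2) * hab
  exact abs_le_of_sq_le_sq' (le_of_mul_le_mul_left hsq (by positivity)) hP |>.2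

theorem coe_innerDual_setOf_mul_norm_le_inner [CompleteSpace E] (hv : v ≠ 0) (ha : 0 ≤ a)
    (hb : 0 ≤ b) (hab : a ^ 2 + b ^ 2 = ‖v‖ ^ 2) :
    (ProperCone.innerDual {x : E | a * ‖x‖ ≤ ⟪v, x⟫} : Set E) = {y | b * ‖y‖ ≤ ⟪v, y⟫} := by
  ext y
  simp only [SetLike.mem_coe, ProperCone.mem_innerDual, Set.mem_ofPred_eq]
  exact ⟨fun hy => mul_norm_le_inner_of_forall_inner_nonneg hv ha hb hab fun x => @hy x,
    fun hy _ hx => inner_nonneg_of_mul_norm_le_inner hv ha hb hab hx hy⟩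

end CircularCone

namespace EuclideanSpace

variable {ι : Type*} [Fintype ι]

theorem norm_toLp_eq_sqrt_sum (x : ι → ℝ) : ‖toLp 2 x‖ = √(∑ i, x i ^ 2) := by
  simp [EuclideanSpace.norm_eq]

theorem inner_toLp_toLp_eq_sum (x y : ι → ℝ) : ⟪toLp 2 x, toLp 2 y⟫ = ∑ i, x i * y i := by
  simp [inner_toLp_toLp, dotProduct, mul_comm]

end EuclideanSpace

theorem stmt3 {r : ℕ} (hr : 1 ≤ r) :
    {y : Fin r → ℝ | ∀ x : Fin r → ℝ,
        ((∀ i, 0 ≤ x i) ∧ Real.sqrt ((r : ℝ) - 1) * Real.sqrt (∑ i, x i ^ 2) ≤ ∑ i, x i) →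
        0 ≤ ∑ i, x i * y i}
    = {y : Fin r → ℝ | Real.sqrt (∑ i, y i ^ 2) ≤ ∑ i, y i} := by
  set e : EuclideanSpace ℝ (Fin r) := toLp 2 1
  have hr' : (1 : ℝ) ≤ r := by exact_mod_cast hr
  have he2 : ‖e‖ ^ 2 = r := by simp [e, EuclideanSpace.real_norm_sq_eq]
  have he : e ≠ 0 := fun h => by simp [h] at he2; linarith
  have hab : √((r : ℝ) - 1) ^ 2 + 1 ^ 2 = ‖e‖ ^ 2 := by
    rw [he2, Real.sq_sqrt (by linarith)]; ring
  have hsum : ∀ x : Fin r → ℝ, ∑ i, x i = ⟪e, toLp 2 x⟫ := fun x => by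
    simp [e, EuclideanSpace.inner_toLp_toLp_eq_sum]
  -- `C` lies in the orthant: each basis vector is in the `1`-cone, which is dual to `C`.
  have hpos : ∀ x : Fin r → ℝ, √((r : ℝ) - 1) * ‖toLp 2 x‖ ≤ ⟪e, toLp 2 x⟫ → ∀ i, 0 ≤ x i :=
    fun x hx i => by
      simpa [EuclideanSpace.inner_single_right] using
        inner_nonneg_of_mul_norm_le_inner he (Real.sqrt_nonneg _) zero_le_one hab hx
          (y := EuclideanSpace.single i 1) (by simp [e, EuclideanSpace.inner_single_right])
  ext y
  have hdual := Set.ext_iff.1 (coe_innerDual_setOf_mul_norm_le_inner he (Real.sqrt_nonneg _)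
    zero_le_one hab) (toLp 2 y)
  simp only [SetLike.mem_coe, ProperCone.mem_innerDual, Set.mem_ofPred_eq, one_mul] at hdual ⊢
  simp only [← EuclideanSpace.norm_toLp_eq_sqrt_sum, ← EuclideanSpace.inner_toLp_toLp_eq_sum]
  simp only [hsum]
  rw [← hdual, (toLp_surjective 2).forall]
  exact forall_congr' fun x => ⟨fun h hx => h ⟨hpos x hx, hx⟩, fun h hx => h hx.2⟩
end

section
/- Let Q ∈ ℝ^{r×r} be a matrix satisfying Qᵀe = e and, for each row i, Q(i,:)·e ≥ ‖Q(i,:)‖₂. Then |det(Q)| ≤ 1. Moreover, if |det(Q)| = 1, then for all i, Q(i,:)·e = ‖Q(i,:)‖₂ = 1 and Q is an orthogonal matrix. -/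
open Matrix BigOperators

/-!
With `s i = ∑ j, Q i j`, the hypotheses give `‖Q i‖₂ ≤ s i`, `s i ≥ 0` and `∑ i, s i = r`, so
Hadamard's inequality and AM-GM give `|det Q| ≤ ∏ i, ‖Q i‖₂ ≤ ∏ i, s i ≤ 1`.

Both Hadamard's inequality and the equality case rest on one fact about a positive semidefinite
matrix `G` of size `r` with `trace G ≤ r`: AM-GM on its eigenvalues gives `det G ≤ 1`, with
equality only if all eigenvalues are `1`, i.e. `G = 1`. For Hadamard, take `G = B Bᵀ` where `B` is
`A` with rows scaled to unit length; for the equality case, `G = Q Qᵀ`.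
-/

section AMGM

variable {ι : Type*} [Fintype ι] {z : ι → ℝ}

lemma prod_exp_sub_one_le_one (hsum : ∑ i, z i ≤ Fintype.card ι) :
    ∏ i, Real.exp (z i - 1) ≤ 1 := by
  rw [← Real.exp_sum, Real.exp_le_one_iff, Finset.sum_sub_distrib]
  simpa using hsum

lemma prod_le_one_of_sum_le_card (hz : ∀ i, 0 ≤ z i) (hsum : ∑ i, z i ≤ Fintype.card ι) :
    ∏ i, z i ≤ 1 := by
  refine le_trans ?_ (prod_exp_sub_one_le_one hsum)
  exact Finset.prod_le_prod (fun i _ => hz i) fun i _ => by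
    linarith [Real.add_one_le_exp (z i - 1)]

lemma eq_one_of_prod_eq_one_of_sum_le_card (hz : ∀ i, 0 ≤ z i)
    (hsum : ∑ i, z i ≤ Fintype.card ι) (hprod : ∏ i, z i = 1) (i : ι) : z i = 1 := by
  by_contra hi
  have hpos : ∀ j, 0 < z j := fun j => (hz j).lt_of_ne fun h => by
    simp [Finset.prod_eq_zero (Finset.mem_univ j) h.symm] at hprod
  have hlt : ∏ j, z j < ∏ j, Real.exp (z j - 1) :=
    Finset.prod_lt_prod (fun j _ => hpos j)
      (fun j _ => by linarith [Real.add_one_le_exp (z j - 1)])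
      ⟨i, Finset.mem_univ i, by linarith [Real.add_one_lt_exp (sub_ne_zero.mpr hi)]⟩
  linarith [prod_exp_sub_one_le_one hsum]

end AMGM

namespace Matrix

lemma mul_transpose_self_apply_self {m n : Type*} [Fintype n] (A : Matrix m n ℝ) (i : m) :
    (A * Aᵀ) i i = ∑ j, A i j ^ 2 := by
  simp [mul_apply, sq]

lemma posSemidef_self_mul_transpose {m n : Type*} [Fintype m] [Fintype n] (A : Matrix m n ℝ) :
    (A * Aᵀ).PosSemidef := by
  simpa using posSemidef_self_mul_conjTranspose A

lemma trace_mul_transpose_self {m n : Type*} [Fintype m] [Fintype n] (A : Matrix m n ℝ) :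
    (A * Aᵀ).trace = ∑ i, ∑ j, A i j ^ 2 :=
  Finset.sum_congr rfl fun i _ => mul_transpose_self_apply_self A i

variable {n : Type*} [Fintype n] [DecidableEq n] {A : Matrix n n ℝ}

lemma PosSemidef.sum_eigenvalues_le_card (hA : A.PosSemidef) (htr : A.trace ≤ Fintype.card n) :
    ∑ i, hA.isHermitian.eigenvalues i ≤ Fintype.card n := by
  simpa [hA.isHermitian.trace_eq_sum_eigenvalues] using htr

lemma PosSemidef.det_le_one_of_trace_le_card (hA : A.PosSemidef)
    (htr : A.trace ≤ Fintype.card n) : A.det ≤ 1 := by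
  simpa [hA.isHermitian.det_eq_prod_eigenvalues] using
    prod_le_one_of_sum_le_card hA.eigenvalues_nonneg (hA.sum_eigenvalues_le_card htr)

lemma PosSemidef.eq_one_of_trace_le_card_of_det_eq_one (hA : A.PosSemidef)
    (htr : A.trace ≤ Fintype.card n) (hdet : A.det = 1) : A = 1 := by
  have heig : hA.isHermitian.eigenvalues = 1 :=
    funext <| eq_one_of_prod_eq_one_of_sum_le_card hA.eigenvalues_nonneg
      (hA.sum_eigenvalues_le_card htr)
      (by simpa [hA.isHermitian.det_eq_prod_eigenvalues] using hdet)
  rw [hA.isHermitian.spectral_theorem, heig]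
  simp

lemma det_sq_le_prod_sum_sq (A : Matrix n n ℝ) : A.det ^ 2 ≤ ∏ i, ∑ j, A i j ^ 2 := by
  set N : n → ℝ := fun i => ∑ j, A i j ^ 2
  have hN : ∀ i, 0 ≤ N i := fun i => by positivity
  by_cases! hzero : ∃ i, N i = 0
  · obtain ⟨i, hi⟩ := hzero
    have hrow : ∀ j, A i j = 0 := fun j =>
      pow_eq_zero_iff two_ne_zero |>.mp <|
        (Finset.sum_eq_zero_iff_of_nonneg fun j _ => sq_nonneg (A i j)).mp hi j (Finset.mem_univ j)
    rw [det_eq_zero_of_row_eq_zero i hrow]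
    simpa using Finset.prod_nonneg fun i _ => hN i
  have hNpos : ∀ i, 0 < N i := fun i => (hN i).lt_of_ne' (hzero i)
  set d : n → ℝ := fun i => (√(N i))⁻¹
  have hd : ∀ i, d i ^ 2 = (N i)⁻¹ := fun i => by simp [d, inv_pow, Real.sq_sqrt (hN i)]
  set B := diagonal d * A
  have htr : (B * Bᵀ).trace = Fintype.card n := by
    rw [trace_mul_transpose_self]
    simp [B, diagonal_mul, mul_pow, ← Finset.mul_sum, hd, N, inv_mul_cancel₀ (hzero _)]
  have hdet : (B * Bᵀ).det = A.det ^ 2 / ∏ i, N i := by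
    rw [det_mul, det_transpose, det_mul, det_diagonal, ← sq, mul_pow, ← Finset.prod_pow]
    simp [hd, Finset.prod_inv_distrib, div_eq_inv_mul]
  have := (posSemidef_self_mul_transpose B).det_le_one_of_trace_le_card htr.le
  rwa [hdet, div_le_one (Finset.prod_pos fun i _ => hNpos i)] at this

end Matrix

theorem stmt4 {r : ℕ} (Q : Matrix (Fin r) (Fin r) ℝ)
    (hcol : ∀ j, ∑ i, Q i j = 1)
    (hrow : ∀ i, Real.sqrt (∑ j, (Q i j) ^ 2) ≤ ∑ j, Q i j) :
    |Q.det| ≤ 1 ∧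
    (|Q.det| = 1 →
      (∀ i, ∑ j, Q i j = 1 ∧ Real.sqrt (∑ j, (Q i j) ^ 2) = 1) ∧ Qᵀ * Q = 1) := by
  set s : Fin r → ℝ := fun i => ∑ j, Q i j
  have hs_nonneg : ∀ i, 0 ≤ s i := fun i => (Real.sqrt_nonneg _).trans (hrow i)
  have hs_sum : ∑ i, s i = Fintype.card (Fin r) :=
    Finset.sum_comm.trans (by simp [hcol])
  have hnorm : ∀ i, ∑ j, Q i j ^ 2 ≤ s i ^ 2 := fun i =>
    (Real.sqrt_le_left (hs_nonneg i)).mp (hrow i)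
  have hs_prod : ∏ i, s i ≤ 1 := prod_le_one_of_sum_le_card hs_nonneg hs_sum.le
  have hs_prod_nonneg : 0 ≤ ∏ i, s i := Finset.prod_nonneg fun i _ => hs_nonneg i
  have hdet : Q.det ^ 2 ≤ (∏ i, s i) ^ 2 := calc
    Q.det ^ 2 ≤ ∏ i, ∑ j, Q i j ^ 2 := det_sq_le_prod_sum_sq Q
    _ ≤ ∏ i, s i ^ 2 := Finset.prod_le_prod (fun i _ => by positivity) fun i _ => hnorm i
    _ = (∏ i, s i) ^ 2 := Finset.prod_pow _ _ _
  refine ⟨?_, fun hdet_one => ?_⟩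
  · rw [← sq_le_one_iff_abs_le_one]
    exact hdet.trans (pow_le_one₀ hs_prod_nonneg hs_prod)
  have hdet_sq : Q.det ^ 2 = 1 := by rw [← sq_abs, hdet_one, one_pow]
  have hs_prod_one : ∏ i, s i = 1 := le_antisymm hs_prod (by nlinarith)
  have hs_one : ∀ i, s i = 1 :=
    eq_one_of_prod_eq_one_of_sum_le_card hs_nonneg hs_sum.le hs_prod_one
  have htr : (Q * Qᵀ).trace ≤ Fintype.card (Fin r) := by
    rw [trace_mul_transpose_self, ← hs_sum]
    exact Finset.sum_le_sum fun i _ => by simpa [hs_one i] using hnorm i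
  have hG : Q * Qᵀ = 1 := (posSemidef_self_mul_transpose Q).eq_one_of_trace_le_card_of_det_eq_one
    htr (by rw [det_mul, det_transpose, ← sq, hdet_sq])
  refine ⟨fun i => ⟨hs_one i, ?_⟩, mul_eq_one_comm.mp hG⟩
  rw [← mul_transpose_self_apply_self, hG, one_apply_eq, Real.sqrt_one]
end

section
/- Let a < b be real numbers and let d ∈ ℝ^r satisfy ‖d‖₂ = 1 and dᵀx ∈ {a,b} for every x ∈ {a,b}^r. Then d = ±e_i for some standard basis vector e_i. -/
open BigOperators

theorem stmt6 {r : ℕ} (a b : ℝ) (hab : a < b) (d : Fin r → ℝ)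
    (hd : Real.sqrt (∑ i, (d i) ^ 2) = 1)
    (h : ∀ x : Fin r → ℝ, (∀ i, x i = a ∨ x i = b) →
        (∑ i, d i * x i = a ∨ ∑ i, d i * x i = b)) :
    ∃ i : Fin r, d = Pi.single i 1 ∨ d = Pi.single i (-1) := by
  have hba : (0:ℝ) < b - a := sub_pos.mpr hab
  have hsum : ∑ i, d i ^ 2 = 1 := by
    rwa [Real.sqrt_eq_one] at hd
  have htri : ∀ i, d i = 0 ∨ d i = 1 ∨ d i = -1 := by
    intro i
    have hS := h (fun _ => a) (fun _ => Or.inl rfl)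
    have hT := h (Function.update (fun _ => a) i b) (by
      intro j
      by_cases hj : j = i
      · subst hj; right; simp
      · left; simp [Function.update_of_ne hj])
    have hdiff : (∑ j, d j * (Function.update (fun _ => a) i b j)) -
        (∑ j, d j * a) = d i * (b - a) := by
      rw [← Finset.sum_sub_distrib]
      rw [Finset.sum_eq_single i]
      · simp; ring
      · intro j _ hj
        simp [Function.update_of_ne hj]
      · intro hi; exact absurd (Finset.mem_univ i) hi
    have key : d i * (b - a) = 0 ∨ d i * (b - a) = b - a ∨ d i * (b - a) = -(b - a) := by
      rcases hS with hS | hS <;> rcases hT with hT | hT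
      · left; rw [← hdiff, hS, hT]; ring
      · right; left; rw [← hdiff, hS, hT]
      · right; right; rw [← hdiff, hS, hT]; ring
      · left; rw [← hdiff, hS, hT]; ring
    rcases key with k | k | k
    · left; exact (mul_eq_zero.mp k).resolve_right (ne_of_gt hba)
    · right; left; nlinarith
    · right; right; nlinarith
  have hex : ∃ i, d i ≠ 0 := by
    by_contra hc
    push_neg at hc
    rw [Finset.sum_eq_zero (fun i _ => by rw [hc i]; ring)] at hsum
    norm_num at hsum
  obtain ⟨i, hi⟩ := hex
  have hone : ∀ j, d j ≠ 0 → d j ^ 2 = 1 := by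
    intro j hj
    rcases htri j with h0 | h0 | h0
    · exact absurd h0 hj
    · rw [h0]; norm_num
    · rw [h0]; norm_num
  have hzero : ∀ j, j ≠ i → d j = 0 := by
    intro j hj
    by_contra hjz
    have h1 : d i ^ 2 = 1 := hone i hi
    have h2 : d j ^ 2 = 1 := hone j hjz
    have hle : d i ^ 2 + d j ^ 2 ≤ ∑ k, d k ^ 2 := by
      have := Finset.sum_le_sum_of_subset_of_nonneg
        (Finset.subset_univ ({i, j} : Finset (Fin r)))
        (fun k _ _ => sq_nonneg (d k))
      rwa [Finset.sum_pair (Ne.symm hj)] at this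
    rw [h1, h2, hsum] at hle
    linarith
  refine ⟨i, ?_⟩
  rcases htri i with h0 | h1 | h1
  · exact absurd h0 hi
  · left; funext j
    by_cases hj : j = i
    · subst hj; simp [h1]
    · simp [Pi.single, Function.update_of_ne hj, hzero j hj]
  · right; funext j
    by_cases hj : j = i
    · subst hj; simp [h1]
    · simp [Pi.single, Function.update_of_ne hj, hzero j hj]
end

section
/- The unique minimizer of f₀(X) = log det(X^{-1}) over symmetric positive definite r×r matrices X subject to eᵀXe ≤ a and X ≥ 0 (entrywise) is X* = (a/r)·I, for any a > 0. -/
/-!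
The eigenvalues of a positive definite `X` are positive, so concavity of `log` (AM–GM) gives
`log det X = ∑ log λᵢ ≤ r log (tr X / r)`, with equality only when all `λᵢ` coincide, i.e. when
`X` is a scalar matrix. Entrywise nonnegativity gives `tr X ≤ eᵀ X e ≤ a`, hence
`log det X⁻¹ = -log det X ≥ -r log (a / r)`, and equality forces `X = (tr X / r) I` with
`tr X = a`.
-/

open Matrix BigOperators

namespace Real

variable {ι : Type*} [Fintype ι] [Nonempty ι] {z : ι → ℝ}

lemma sum_log_le_card_mul_log_mean (hz : ∀ i, 0 < z i) :
    ∑ i, log (z i) ≤ Fintype.card ι * log ((∑ i, z i) / Fintype.card ι) := by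
  have hN : (0 : ℝ) < Fintype.card ι := by exact_mod_cast Fintype.card_pos
  have := strictConcaveOn_log_Ioi.concaveOn.le_map_sum (t := Finset.univ)
    (w := fun _ => (Fintype.card ι : ℝ)⁻¹) (p := z) (fun _ _ => by positivity)
    (by simp) (fun i _ => hz i)
  simp only [smul_eq_mul, ← Finset.mul_sum] at this
  rwa [inv_mul_eq_div, inv_mul_eq_div, div_le_iff₀ hN, mul_comm] at this

lemma eq_mean_of_sum_log_eq (hz : ∀ i, 0 < z i)
    (h : ∑ i, log (z i) = Fintype.card ι * log ((∑ i, z i) / Fintype.card ι)) (j : ι) :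
    z j = (∑ i, z i) / Fintype.card ι := by
  have hN : (0 : ℝ) < Fintype.card ι := by exact_mod_cast Fintype.card_pos
  have hmean : ∑ i, (Fintype.card ι : ℝ)⁻¹ • z i = (∑ i, z i) / Fintype.card ι := by
    rw [← Finset.smul_sum, smul_eq_mul, inv_mul_eq_div]
  refine hmean ▸ (strictConcaveOn_log_Ioi.map_sum_eq_iff (t := Finset.univ)
    (w := fun _ => (Fintype.card ι : ℝ)⁻¹) (p := z) (fun _ _ => by positivity)
    (by simp) (fun i _ => hz i)).mp ?_ j (Finset.mem_univ j)
  rw [hmean, ← Finset.smul_sum, h, smul_eq_mul, inv_mul_cancel_left₀ hN.ne']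

lemma log_det_inv {n : Type*} [Fintype n] [DecidableEq n] (A : Matrix n n ℝ) :
    log A⁻¹.det = -log A.det := by
  rw [det_nonsing_inv, Ring.inverse_eq_inv', log_inv]

end Real

namespace Matrix

variable {n : Type*} [Fintype n]

lemma trace_le_sum_of_nonneg {R : Type*} [AddCommMonoid R] [PartialOrder R]
    [IsOrderedAddMonoid R] {A : Matrix n n R} (hA : ∀ i j, 0 ≤ A i j) :
    A.trace ≤ ∑ i, ∑ j, A i j :=
  Finset.sum_le_sum fun i _ => Finset.single_le_sum (fun j _ => hA i j) (Finset.mem_univ i)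

variable [DecidableEq n]

lemma IsHermitian.eq_smul_one_of_eigenvalues_eq {𝕜 : Type*} [RCLike 𝕜] {A : Matrix n n 𝕜}
    (hA : A.IsHermitian) {c : ℝ} (h : ∀ i, hA.eigenvalues i = c) : A = (c : 𝕜) • 1 := by
  rw [CFC.eq_algebraMap_of_spectrum_subset_singleton (R := ℝ) A c (by
    rw [hA.spectrum_real_eq_range_eigenvalues]; rintro _ ⟨i, rfl⟩; exact h i),
    Algebra.algebraMap_eq_smul_one, RCLike.real_smul_eq_coe_smul (K := 𝕜)]

variable {A : Matrix n n ℝ}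

lemma PosDef.log_det_eq_sum_log_eigenvalues (hA : A.PosDef) :
    Real.log A.det = ∑ i, Real.log (hA.isHermitian.eigenvalues i) := by
  rw [← Real.log_prod fun i _ => (hA.eigenvalues_pos i).ne']
  simpa using congrArg Real.log hA.isHermitian.det_eq_prod_eigenvalues

lemma IsHermitian.trace_eq_sum_eigenvalues_real (hA : A.IsHermitian) :
    A.trace = ∑ i, hA.eigenvalues i := by
  simpa using hA.trace_eq_sum_eigenvalues

variable [Nonempty n]

lemma PosDef.log_det_le (hA : A.PosDef) :
    Real.log A.det ≤ Fintype.card n * Real.log (A.trace / Fintype.card n) := by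
  rw [hA.log_det_eq_sum_log_eigenvalues, hA.isHermitian.trace_eq_sum_eigenvalues_real]
  exact Real.sum_log_le_card_mul_log_mean hA.eigenvalues_pos

lemma PosDef.eq_smul_one_of_log_det_eq (hA : A.PosDef)
    (h : Real.log A.det = Fintype.card n * Real.log (A.trace / Fintype.card n)) :
    A = (A.trace / Fintype.card n) • 1 := by
  rw [hA.log_det_eq_sum_log_eigenvalues, hA.isHermitian.trace_eq_sum_eigenvalues_real] at h
  rw [hA.isHermitian.trace_eq_sum_eigenvalues_real]
  exact hA.isHermitian.eq_smul_one_of_eigenvalues_eq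
    (Real.eq_mean_of_sum_log_eq hA.eigenvalues_pos h)

end Matrix

theorem stmt13 {r : ℕ} (hr : 0 < r) (a : ℝ) (ha : 0 < a) :
    (((a / r) • (1 : Matrix (Fin r) (Fin r) ℝ)).PosDef ∧
      (∑ i, ∑ j, ((a / r) • (1 : Matrix (Fin r) (Fin r) ℝ)) i j) ≤ a ∧
      (∀ i j, 0 ≤ ((a / r) • (1 : Matrix (Fin r) (Fin r) ℝ)) i j)) ∧
    ∀ X : Matrix (Fin r) (Fin r) ℝ, X.PosDef → (∑ i, ∑ j, X i j) ≤ a →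
      (∀ i j, 0 ≤ X i j) →
      Real.log (((a / r) • (1 : Matrix (Fin r) (Fin r) ℝ))⁻¹).det ≤ Real.log (X⁻¹).det ∧
      (Real.log (X⁻¹).det = Real.log (((a / r) • (1 : Matrix (Fin r) (Fin r) ℝ))⁻¹).det →
        X = (a / r) • (1 : Matrix (Fin r) (Fin r) ℝ)) := by
  have hr' : (0 : ℝ) < r := by exact_mod_cast hr
  set c := a / r with hc_def
  have hc : 0 < c := div_pos ha hr'
  have hlog_c : Real.log ((c • (1 : Matrix (Fin r) (Fin r) ℝ))⁻¹).det = -(r * Real.log c) := by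
    rw [Real.log_det_inv, det_smul, det_one, mul_one, Fintype.card_fin, Real.log_pow]
  refine ⟨⟨PosDef.one.smul hc, ?_, fun i j => ?_⟩, fun X hX hsum hnn => ?_⟩
  · simp [Matrix.smul_apply, one_apply, hc_def, mul_div_cancel₀ a hr'.ne']
  · rw [Matrix.smul_apply, one_apply]; split_ifs <;> simp [hc.le]
  have : Nonempty (Fin r) := ⟨⟨0, hr⟩⟩
  have hdet := hX.log_det_le
  rw [Fintype.card_fin] at hdet
  have htr : X.trace / r ≤ c :=
    div_le_div_of_nonneg_right ((trace_le_sum_of_nonneg hnn).trans hsum) hr'.le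
  have hlog_tr : Real.log (X.trace / r) ≤ Real.log c :=
    Real.log_le_log (div_pos hX.trace_pos hr') htr
  have hbound : Real.log X.det ≤ r * Real.log c := hdet.trans (by gcongr)
  rw [hlog_c, Real.log_det_inv]
  refine ⟨by linarith, fun heq => ?_⟩
  have hlog_tr_eq : Real.log (X.trace / r) = Real.log c :=
    hlog_tr.antisymm (le_of_mul_le_mul_left (by linarith) hr')
  have hX_eq := hX.eq_smul_one_of_log_det_eq (by rw [Fintype.card_fin, hlog_tr_eq]; linarith)
  rwa [Fintype.card_fin, Real.log_injOn_pos (div_pos hX.trace_pos hr') hc hlog_tr_eq] at hX_eq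
end

section
/- For γ > 0 and a real symmetric matrix A with eigendecomposition A = P·diag(d)·Pᵀ, the matrix Z = P·diag(Φ(d))·Pᵀ where Φ(x) = (√(x²+4γ)+x)/2 applied entrywise, is the unique positive definite minimizer over Z ≻ 0 of -γ·log det(Z) + (1/2)·‖Z - A‖_F². -/
/-!
Let `f(Z) = -γ log det Z + ½‖Z - A‖_F²` and `S = P diag(Φ(d)) Pᵀ`. Since `Φ(x) (Φ(x) - x) = γ`
with `Φ(x) > 0`, `S` is positive definite and satisfies the first-order condition
`S (S - A) = γ I`, i.e. `S - A = γ S⁻¹`. For positive definite `Z`, the tangent bound of the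
concave function `log det` at `S`, `log det Z ≤ log det S + tr(S⁻¹ Z) - n` (from `log λ ≤ λ - 1`
on the eigenvalues of `S^{-1/2} Z S^{-1/2}`), combined with expanding `½‖Z - A‖_F²` around `S`,
gives `f(S) + ½‖Z - S‖_F² ≤ f(Z)`. Hence `S` is the unique minimizer.
-/

open Matrix

namespace Matrix

section Frobenius

variable {m n : Type*} [Fintype m] [Fintype n]

lemma sum_sq_sub_eq_add_trace (Z S A : Matrix m n ℝ) :
    ∑ i, ∑ j, (Z i j - A i j) ^ 2 = ∑ i, ∑ j, (Z i j - S i j) ^ 2 + ∑ i, ∑ j, (S i j - A i j) ^ 2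
      + 2 * ((Z - S)ᵀ * (S - A)).trace := by
  have h i j : (Z i j - A i j) ^ 2 = (Z i j - S i j) ^ 2 + (S i j - A i j) ^ 2
      + 2 * ((Z - S) i j * (S - A) i j) := by simp only [sub_apply]; ring
  simp only [h, Finset.sum_add_distrib, ← Finset.mul_sum, trace, diag_apply, mul_apply,
    transpose_apply]
  rw [Finset.sum_comm (γ := n)]

lemma eq_of_sum_sq_sub_eq_zero {M N : Matrix m n ℝ}
    (h : ∑ i, ∑ j, (M i j - N i j) ^ 2 = 0) : M = N := by
  ext i j
  rw [Fintype.sum_eq_zero_iff_of_nonneg (fun _ => by positivity)] at h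
  have := congrFun h i
  rw [Pi.zero_apply, Fintype.sum_eq_zero_iff_of_nonneg (fun _ => by positivity)] at this
  exact sub_eq_zero.mp (pow_eq_zero_iff two_ne_zero |>.mp (congrFun this j))

end Frobenius

section Conjugation

variable {n R : Type*} [Fintype n] [DecidableEq n] [CommRing R]

lemma conj_diagonal_mul_conj_diagonal {P : Matrix n n R} (hP : Pᵀ * P = 1) (v w : n → R) :
    P * diagonal v * Pᵀ * (P * diagonal w * Pᵀ) = P * diagonal (v * w) * Pᵀ := by
  simp only [Matrix.mul_assoc]
  rw [← Matrix.mul_assoc Pᵀ P, hP, Matrix.one_mul, ← Matrix.mul_assoc (diagonal v),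
    diagonal_mul_diagonal]
  rfl

lemma conj_diagonal_const {P : Matrix n n R} (hP : Pᵀ * P = 1) (c : R) :
    P * diagonal (fun _ => c) * Pᵀ = c • 1 := by
  rw [← smul_one_eq_diagonal, Matrix.mul_smul, Matrix.mul_one, Matrix.smul_mul,
    mul_eq_one_comm.mp hP]

lemma posDef_conj_diagonal {P : Matrix n n ℝ} (hP : Pᵀ * P = 1) {v : n → ℝ}
    (hv : ∀ i, 0 < v i) : (P * diagonal v * Pᵀ).PosDef := by
  have hPunit : IsUnit P := IsUnit.of_mul_eq_one_right Pᵀ hP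
  simpa [star_eq_conjTranspose, conjTranspose_eq_transpose_of_trivial] using
    (hPunit.posDef_star_right_conjugate_iff).mpr (PosDef.diagonal hv)

end Conjugation

section LogDet

variable {n : Type*} [Fintype n] [DecidableEq n]

lemma PosDef.log_det_le_trace_sub_card {X : Matrix n n ℝ} (hX : X.PosDef) :
    Real.log X.det ≤ X.trace - Fintype.card n := by
  have hpos := hX.eigenvalues_pos
  rw [hX.isHermitian.det_eq_prod_eigenvalues, hX.isHermitian.trace_eq_sum_eigenvalues]
  simp only [RCLike.ofReal_real_eq_id, id]
  rw [Real.log_prod fun i _ => (hpos i).ne', ← Finset.card_univ, Finset.card_eq_sum_ones,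
    Nat.cast_sum, Nat.cast_one, ← Finset.sum_sub_distrib]
  exact Finset.sum_le_sum fun i _ => Real.log_le_sub_one_of_pos (hpos i)

open scoped MatrixOrder in
lemma PosDef.log_det_le_log_det_add_trace_inv_mul {S Z : Matrix n n ℝ} (hS : S.PosDef)
    (hZ : Z.PosDef) :
    Real.log Z.det ≤ Real.log S.det + (S⁻¹ * Z).trace - Fintype.card n := by
  set R := CFC.sqrt S
  have hRR : R * R = S := CFC.sqrt_mul_sqrt_self S hS.posSemidef.nonneg
  have hR : R.IsHermitian := (nonneg_iff_posSemidef.mp (CFC.sqrt_nonneg S)).isHermitian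
  have hdetR : R.det * R.det = S.det := by rw [← det_mul, hRR]
  have hRunit : IsUnit R := (isUnit_iff_isUnit_det R).mpr <|
    isUnit_iff_ne_zero.mpr (left_ne_zero_of_mul (hdetR ▸ hS.det_pos.ne'))
  have hX : (R⁻¹ * Z * R⁻¹).PosDef := by
    have := (IsUnit.posDef_star_left_conjugate_iff (isUnit_nonsing_inv_iff.mpr hRunit)).mpr hZ
    rwa [star_eq_conjTranspose, hR.inv.eq] at this
  have hdet : (R⁻¹ * Z * R⁻¹).det = Z.det / S.det := by
    rw [det_mul, det_mul, det_nonsing_inv, Ring.inverse_eq_inv', ← hdetR]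
    field_simp
  have htr : (R⁻¹ * Z * R⁻¹).trace = (S⁻¹ * Z).trace := by
    rw [trace_mul_cycle, ← hRR, mul_inv_rev]
  have := hX.log_det_le_trace_sub_card
  rw [hdet, htr, Real.log_div hZ.det_pos.ne' hS.det_pos.ne'] at this
  linarith

end LogDet

end Matrix

section Objective

variable {n : Type*} [Fintype n] [DecidableEq n]

noncomputable def logDetProxObjective (γ : ℝ) (A Z : Matrix n n ℝ) : ℝ :=
  -γ * Real.log Z.det + 1 / 2 * ∑ i, ∑ j, (Z i j - A i j) ^ 2

variable {γ : ℝ} {A S Z : Matrix n n ℝ}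

theorem logDetProxObjective_add_le (hγ : 0 ≤ γ) (hS : S.PosDef) (hSA : S * (S - A) = γ • 1)
    (hZ : Z.PosDef) :
    logDetProxObjective γ A S + 1 / 2 * ∑ i, ∑ j, (Z i j - S i j) ^ 2
      ≤ logDetProxObjective γ A Z := by
  have hSunit : IsUnit S.det := (isUnit_iff_isUnit_det S).mp hS.isUnit
  have hinv : S - A = γ • S⁻¹ := by
    rw [← nonsing_inv_mul_cancel_left S (S - A) hSunit, hSA, mul_smul_comm, mul_one]
  have htr : ((Z - S)ᵀ * (S - A)).trace = γ * (S⁻¹ * Z).trace - γ * Fintype.card n := by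
    have hsymm : (Z - S)ᵀ = Z - S := isHermitian_iff_isSymm.mp (hZ.isHermitian.sub hS.isHermitian)
    rw [hsymm, hinv, mul_smul_comm, sub_mul, trace_smul, trace_sub, trace_mul_comm Z,
      mul_nonsing_inv S hSunit, trace_one, smul_eq_mul, mul_sub]
  have hlog := mul_le_mul_of_nonneg_left (hS.log_det_le_log_det_add_trace_inv_mul hZ) hγ
  unfold logDetProxObjective
  rw [sum_sq_sub_eq_add_trace Z S A, htr]
  linarith

theorem logDetProxObjective_le (hγ : 0 ≤ γ) (hS : S.PosDef) (hSA : S * (S - A) = γ • 1)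
    (hZ : Z.PosDef) : logDetProxObjective γ A S ≤ logDetProxObjective γ A Z := by
  have hnonneg : 0 ≤ ∑ i, ∑ j, (Z i j - S i j) ^ 2 := by positivity
  linarith [logDetProxObjective_add_le hγ hS hSA hZ]

theorem eq_of_logDetProxObjective_eq (hγ : 0 ≤ γ) (hS : S.PosDef) (hSA : S * (S - A) = γ • 1)
    (hZ : Z.PosDef) (h : logDetProxObjective γ A Z = logDetProxObjective γ A S) : Z = S := by
  have hnonneg : 0 ≤ ∑ i, ∑ j, (Z i j - S i j) ^ 2 := by positivity
  have := logDetProxObjective_add_le hγ hS hSA hZ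
  exact eq_of_sum_sq_sub_eq_zero (by linarith)

end Objective

-- The positive root of `z - γ / z = x`.
noncomputable def logBarrierProx (γ x : ℝ) : ℝ := (Real.sqrt (x ^ 2 + 4 * γ) + x) / 2

lemma logBarrierProx_pos {γ : ℝ} (hγ : 0 < γ) (x : ℝ) : 0 < logBarrierProx γ x := by
  have : |x| < Real.sqrt (x ^ 2 + 4 * γ) := by
    rw [← Real.sqrt_sq_eq_abs]
    exact Real.sqrt_lt_sqrt (sq_nonneg x) (by linarith)
  unfold logBarrierProx
  linarith [neg_abs_le x]

lemma logBarrierProx_mul_sub {γ : ℝ} (hγ : 0 ≤ γ) (x : ℝ) :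
    logBarrierProx γ x * (logBarrierProx γ x - x) = γ := by
  have := Real.sq_sqrt (by positivity : 0 ≤ x ^ 2 + 4 * γ)
  unfold logBarrierProx
  linear_combination this / 4

theorem stmt15 {r : ℕ} (γ : ℝ) (hγ : 0 < γ)
    (A P : Matrix (Fin r) (Fin r) ℝ) (d : Fin r → ℝ)
    (hP : Pᵀ * P = 1)
    (hA : A = P * Matrix.diagonal d * Pᵀ) :
    (P * Matrix.diagonal (fun i => (Real.sqrt ((d i) ^ 2 + 4 * γ) + d i) / 2) * Pᵀ).PosDef ∧
    ∀ Z : Matrix (Fin r) (Fin r) ℝ, Z.PosDef →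
      (-γ * Real.log (P * Matrix.diagonal (fun i => (Real.sqrt ((d i) ^ 2 + 4 * γ) + d i) / 2) * Pᵀ).det
          + (1 / 2) * ∑ i, ∑ j,
              ((P * Matrix.diagonal (fun i => (Real.sqrt ((d i) ^ 2 + 4 * γ) + d i) / 2) * Pᵀ) i j - A i j) ^ 2
        ≤ -γ * Real.log Z.det + (1 / 2) * ∑ i, ∑ j, (Z i j - A i j) ^ 2) ∧
      (-γ * Real.log Z.det + (1 / 2) * ∑ i, ∑ j, (Z i j - A i j) ^ 2
          = -γ * Real.log (P * Matrix.diagonal (fun i => (Real.sqrt ((d i) ^ 2 + 4 * γ) + d i) / 2) * Pᵀ).det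
            + (1 / 2) * ∑ i, ∑ j,
                ((P * Matrix.diagonal (fun i => (Real.sqrt ((d i) ^ 2 + 4 * γ) + d i) / 2) * Pᵀ) i j - A i j) ^ 2 →
        Z = P * Matrix.diagonal (fun i => (Real.sqrt ((d i) ^ 2 + 4 * γ) + d i) / 2) * Pᵀ) := by
  set Φ : Fin r → ℝ := fun i => logBarrierProx γ (d i)
  have hS : (P * diagonal Φ * Pᵀ).PosDef :=
    posDef_conj_diagonal hP fun i => logBarrierProx_pos hγ (d i)
  have hSA : P * diagonal Φ * Pᵀ * (P * diagonal Φ * Pᵀ - A) = γ • 1 := by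
    have hΦ : (Φ * fun i => Φ i - d i) = fun _ => γ :=
      funext fun i => logBarrierProx_mul_sub hγ.le (d i)
    rw [hA, ← Matrix.sub_mul, ← Matrix.mul_sub, diagonal_sub, conj_diagonal_mul_conj_diagonal hP,
      hΦ, conj_diagonal_const hP]
  exact ⟨hS, fun Z hZ => ⟨logDetProxObjective_le hγ.le hS hSA hZ,
    eq_of_logDetProxObjective_eq hγ.le hS hSA hZ⟩⟩
end

section
/- Let g(H) = (1/2)·‖Y - HHᵀ‖_F² for a fixed symmetric matrix Y, and h(H) = (α/4)·‖H‖_F⁴ + (σ/2)·‖H‖_F² with α = 6 and σ = 2‖Y‖₂ (spectral norm). Then the second directional derivative satisfies ∇²g(H)[U,U] ≤ ∇²h(H)[U,U] for all H, U ∈ ℝ^{r×n}; i.e., g is 1-smooth relative to the kernel h. -/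
/-!
Along the line `t ↦ H + t • U` both `g` and `h` are quartic polynomials in `t`, so their second
derivatives at `0` are twice their `t ^ 2`-coefficients. For `g` this coefficient is
`‖HUᵀ + UHᵀ‖² - 2⟨Y, UUᵀ⟩ + 2⟨HHᵀ, UUᵀ⟩`, and Cauchy–Schwarz bounds the three terms by
`4‖H‖²‖U‖²`, `2‖Y‖₂‖U‖²` and `2‖H‖²‖U‖²`; for `h` it is `6‖H‖²‖U‖² + 12⟨H, U⟩² + 2‖Y‖₂‖U‖²`.
-/

open Matrix
open scoped RealInnerProductSpace

theorem hasDerivAt_quartic (a b c d e x : ℝ) :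
    HasDerivAt (fun t : ℝ => a + b * t + c * t ^ 2 + d * t ^ 3 + e * t ^ 4)
      (b + 2 * c * x + 3 * d * x ^ 2 + 4 * e * x ^ 3) x := by
  have h : HasDerivAt (fun t : ℝ => a + b * t + c * t ^ 2 + d * t ^ 3 + e * t ^ 4)
      (0 + b * 1 + c * (2 * x ^ 1) + d * (3 * x ^ 2) + e * (4 * x ^ 3)) x :=
    ((((hasDerivAt_const x a).add ((hasDerivAt_id x).const_mul b)).add
      ((hasDerivAt_pow 2 x).const_mul c)).add ((hasDerivAt_pow 3 x).const_mul d)).add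
      ((hasDerivAt_pow 4 x).const_mul e)
  convert h using 1
  ring

theorem iteratedDeriv_two_quartic_zero (a b c d e : ℝ) :
    iteratedDeriv 2 (fun t : ℝ => a + b * t + c * t ^ 2 + d * t ^ 3 + e * t ^ 4) 0 = 2 * c := by
  have hderiv : deriv (fun t : ℝ => a + b * t + c * t ^ 2 + d * t ^ 3 + e * t ^ 4)
      = fun t => b + 2 * c * t + 3 * d * t ^ 2 + 4 * e * t ^ 3 + 0 * t ^ 4 := by
    funext x
    rw [(hasDerivAt_quartic a b c d e x).deriv]; ring
  rw [iteratedDeriv_succ, iteratedDeriv_one, hderiv,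
    (hasDerivAt_quartic b (2 * c) (3 * d) (4 * e) 0 0).deriv]
  ring

variable {m n k : Type*} [Fintype m] [Fintype n] [Fintype k]

theorem sum_sq_mul_transpose_le (A : Matrix m k ℝ) (B : Matrix n k ℝ) :
    ∑ i, ∑ j, (A * Bᵀ) i j ^ 2 ≤ (∑ i, ∑ l, A i l ^ 2) * ∑ j, ∑ l, B j l ^ 2 := by
  rw [Finset.sum_mul_sum]
  gcongr with i _ j _
  simpa only [mul_apply, transpose_apply] using
    Finset.sum_mul_sq_le_sq_mul_sq Finset.univ (A i) (B j)

theorem sum_sq_add_le (A B : Matrix m n ℝ) :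
    ∑ i, ∑ j, (A + B) i j ^ 2 ≤ 2 * ∑ i, ∑ j, A i j ^ 2 + 2 * ∑ i, ∑ j, B i j ^ 2 := by
  simp only [Finset.mul_sum, ← Finset.sum_add_distrib, Matrix.add_apply]
  gcongr with i _ j _
  nlinarith [sq_nonneg (A i j - B i j)]

theorem sum_sq_transpose (A : Matrix m n ℝ) : ∑ j, ∑ i, Aᵀ j i ^ 2 = ∑ i, ∑ j, A i j ^ 2 :=
  Finset.sum_comm

theorem sum_sum_mul_eq_trace (A B : Matrix m n ℝ) :
    ∑ i, ∑ j, A i j * B i j = trace (A * Bᵀ) := by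
  simp [trace, mul_apply]

theorem sum_sum_sq_eq_trace (A : Matrix m n ℝ) : ∑ i, ∑ j, A i j ^ 2 = trace (A * Aᵀ) := by
  simp only [sq, sum_sum_mul_eq_trace]

theorem sum_gram_mul_gram_eq (A B : Matrix m n ℝ) :
    ∑ i, ∑ j, (A * Aᵀ) i j * (B * Bᵀ) i j = ∑ k, ∑ l, (Aᵀ * B) k l ^ 2 := by
  rw [sum_sum_mul_eq_trace, sum_sum_sq_eq_trace, transpose_mul, transpose_mul,
    transpose_transpose, transpose_transpose, Matrix.mul_assoc, trace_mul_comm]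
  simp only [Matrix.mul_assoc]

theorem sum_gram_mul_gram_le (A B : Matrix m n ℝ) :
    ∑ i, ∑ j, (A * Aᵀ) i j * (B * Bᵀ) i j ≤ (∑ i, ∑ j, A i j ^ 2) * ∑ i, ∑ j, B i j ^ 2 := by
  rw [sum_gram_mul_gram_eq, ← sum_sq_transpose A, ← sum_sq_transpose B]
  simpa only [transpose_transpose] using sum_sq_mul_transpose_le Aᵀ Bᵀ

theorem neg_dotProduct_mulVec_le [DecidableEq m] (Y : Matrix m m ℝ) (v : m → ℝ) :
    -(v ⬝ᵥ Y *ᵥ v) ≤ ‖toEuclideanCLM (𝕜 := ℝ) Y‖ * ∑ i, v i ^ 2 := by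
  set u : EuclideanSpace ℝ m := WithLp.toLp 2 v
  have hinner : ⟪u, toEuclideanCLM (𝕜 := ℝ) Y u⟫ = v ⬝ᵥ Y *ᵥ v := by
    rw [toEuclideanCLM_toLp, EuclideanSpace.inner_toLp_toLp, star_trivial, dotProduct_comm]
  have hnorm : ‖u‖ ^ 2 = ∑ i, v i ^ 2 := EuclideanSpace.real_norm_sq_eq u
  rw [← hinner, ← hnorm]
  calc -⟪u, toEuclideanCLM (𝕜 := ℝ) Y u⟫ ≤ ‖u‖ * ‖toEuclideanCLM (𝕜 := ℝ) Y u‖ :=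
        (neg_le_abs _).trans (abs_real_inner_le_norm _ _)
    _ ≤ ‖u‖ * (‖toEuclideanCLM (𝕜 := ℝ) Y‖ * ‖u‖) := by
        gcongr; exact ContinuousLinearMap.le_opNorm _ _
    _ = _ := by ring

theorem neg_sum_mul_gram_le [DecidableEq m] (Y : Matrix m m ℝ) (U : Matrix m n ℝ) :
    -∑ i, ∑ j, Y i j * (U * Uᵀ) i j ≤ ‖toEuclideanCLM (𝕜 := ℝ) Y‖ * ∑ i, ∑ j, U i j ^ 2 := by
  have hcols : ∑ i, ∑ j, Y i j * (U * Uᵀ) i j = ∑ l, Uᵀ l ⬝ᵥ Y *ᵥ Uᵀ l := by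
    rw [sum_sum_mul_eq_trace, transpose_mul, transpose_transpose, trace_mul_cycle']
    rfl
  rw [hcols, ← Finset.sum_neg_distrib, Finset.sum_comm (f := fun i j => U i j ^ 2),
    Finset.mul_sum]
  exact Finset.sum_le_sum fun l _ => neg_dotProduct_mulVec_le Y (Uᵀ l)

omit [Fintype m] in
theorem gram_add_smul (H U : Matrix m n ℝ) (t : ℝ) :
    (H + t • U) * (H + t • U)ᵀ = H * Hᵀ + t • (H * Uᵀ + U * Hᵀ) + t ^ 2 • (U * Uᵀ) := by
  simp only [transpose_add, transpose_smul, Matrix.add_mul, Matrix.mul_add, Matrix.smul_mul,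
    Matrix.mul_smul, smul_add, smul_smul, sq]
  abel

theorem iteratedDeriv_two_sum_sq_sub_gram (Y : Matrix m m ℝ) (H U : Matrix m n ℝ) :
    iteratedDeriv 2 (fun t : ℝ => ∑ i, ∑ j, (Y - (H + t • U) * (H + t • U)ᵀ) i j ^ 2) 0
      = 2 * (∑ i, ∑ j, (H * Uᵀ + U * Hᵀ) i j ^ 2 - 2 * ∑ i, ∑ j, Y i j * (U * Uᵀ) i j
        + 2 * ∑ i, ∑ j, (H * Hᵀ) i j * (U * Uᵀ) i j) := by
  set P : Matrix m m ℝ := H * Uᵀ + U * Hᵀ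
  set Q : Matrix m m ℝ := U * Uᵀ
  set R : Matrix m m ℝ := Y - H * Hᵀ
  have hentry : ∀ t i j, (Y - (H + t • U) * (H + t • U)ᵀ) i j ^ 2
      = R i j ^ 2 + (-2 * R i j * P i j) * t
        + (P i j ^ 2 - 2 * (Y i j * Q i j) + 2 * ((H * Hᵀ) i j * Q i j)) * t ^ 2
        + (2 * P i j * Q i j) * t ^ 3 + Q i j ^ 2 * t ^ 4 := by
    intro t i j
    rw [gram_add_smul]
    simp only [P, R, Matrix.sub_apply, Matrix.add_apply, Matrix.smul_apply, smul_eq_mul]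
    ring
  simp only [hentry, Finset.sum_add_distrib, Finset.sum_sub_distrib, ← Finset.sum_mul,
    ← Finset.mul_sum]
  exact iteratedDeriv_two_quartic_zero _ _ _ _ _

theorem sum_sq_add_smul (H U : Matrix m n ℝ) (t : ℝ) :
    ∑ i, ∑ j, (H + t • U) i j ^ 2
      = ∑ i, ∑ j, H i j ^ 2 + 2 * (∑ i, ∑ j, H i j * U i j) * t
        + (∑ i, ∑ j, U i j ^ 2) * t ^ 2 := by
  have hentry : ∀ i j,
      (H + t • U) i j ^ 2 = H i j ^ 2 + 2 * (H i j * U i j) * t + U i j ^ 2 * t ^ 2 := by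
    intro i j
    simp only [Matrix.add_apply, Matrix.smul_apply, smul_eq_mul]
    ring
  simp only [hentry, Finset.sum_add_distrib, ← Finset.sum_mul, ← Finset.mul_sum]

theorem iteratedDeriv_two_quartic_kernel_line (a c : ℝ) (H U : Matrix m n ℝ) :
    iteratedDeriv 2 (fun t : ℝ => a * (∑ i, ∑ j, (H + t • U) i j ^ 2) ^ 2
        + c * ∑ i, ∑ j, (H + t • U) i j ^ 2) 0
      = a * (4 * (∑ i, ∑ j, H i j ^ 2) * ∑ i, ∑ j, U i j ^ 2
          + 8 * (∑ i, ∑ j, H i j * U i j) ^ 2) + 2 * c * ∑ i, ∑ j, U i j ^ 2 := by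
  simp only [sum_sq_add_smul]
  set s₀ := ∑ i, ∑ j, H i j ^ 2
  set s₂ := ∑ i, ∑ j, U i j ^ 2
  set b := ∑ i, ∑ j, H i j * U i j
  have hquartic : (fun t : ℝ =>
        a * (s₀ + 2 * b * t + s₂ * t ^ 2) ^ 2 + c * (s₀ + 2 * b * t + s₂ * t ^ 2))
      = fun t => (a * s₀ ^ 2 + c * s₀) + (4 * a * s₀ * b + 2 * c * b) * t
        + (a * (2 * s₀ * s₂ + 4 * b ^ 2) + c * s₂) * t ^ 2 + (4 * a * b * s₂) * t ^ 3
        + (a * s₂ ^ 2) * t ^ 4 := by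
    funext t; ring
  rw [hquartic, iteratedDeriv_two_quartic_zero]
  ring

theorem sum_sq_symm_mul_transpose_le (H U : Matrix m n ℝ) :
    ∑ i, ∑ j, (H * Uᵀ + U * Hᵀ) i j ^ 2 ≤ 4 * (∑ i, ∑ j, H i j ^ 2) * ∑ i, ∑ j, U i j ^ 2 := by
  have hHU := sum_sq_mul_transpose_le H U
  have hUH := sum_sq_mul_transpose_le U H
  linarith [sum_sq_add_le (H * Uᵀ) (U * Hᵀ)]

theorem stmt18_general {r n : ℕ} (Y : Matrix (Fin r) (Fin r) ℝ)
    (g h : Matrix (Fin r) (Fin n) ℝ → ℝ)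
    (hg : ∀ H, g H = (1 / 2) * ∑ i, ∑ j, ((Y - H * Hᵀ) i j) ^ 2)
    (hh : ∀ H, h H = (6 / 4) * (∑ i, ∑ j, (H i j) ^ 2) ^ 2
        + ((2 * ‖Matrix.toEuclideanCLM (𝕜 := ℝ) Y‖) / 2) * ∑ i, ∑ j, (H i j) ^ 2)
    (H U : Matrix (Fin r) (Fin n) ℝ) :
    iteratedDeriv 2 (fun t : ℝ => g (H + t • U)) 0
      ≤ iteratedDeriv 2 (fun t : ℝ => h (H + t • U)) 0 := by
  simp only [hg, hh, iteratedDeriv_const_mul_field, iteratedDeriv_two_sum_sq_sub_gram,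
    iteratedDeriv_two_quartic_kernel_line]
  have hP := sum_sq_symm_mul_transpose_le H U
  have hY := neg_sum_mul_gram_le Y U
  have hHU := sum_gram_mul_gram_le H U
  linarith [sq_nonneg (∑ i, ∑ j, H i j * U i j)]

theorem stmt18 {r n : ℕ} (Y : Matrix (Fin r) (Fin r) ℝ) (hY : Y.IsSymm)
    (g h : Matrix (Fin r) (Fin n) ℝ → ℝ)
    (hg : ∀ H, g H = (1 / 2) * ∑ i, ∑ j, ((Y - H * Hᵀ) i j) ^ 2)
    (hh : ∀ H, h H = (6 / 4) * (∑ i, ∑ j, (H i j) ^ 2) ^ 2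
        + ((2 * ‖Matrix.toEuclideanCLM (𝕜 := ℝ) Y‖) / 2) * ∑ i, ∑ j, (H i j) ^ 2)
    (H U : Matrix (Fin r) (Fin n) ℝ) :
    iteratedDeriv 2 (fun t : ℝ => g (H + t • U)) 0
      ≤ iteratedDeriv 2 (fun t : ℝ => h (H + t • U)) 0 :=
  stmt18_general Y g h hg hh H U
end

section
/- Let the optimization problem be min over H with columns in the probability simplex Δ^r of t(H) = (α̃/4)‖H‖_F⁴ + (σ̃/2)‖H‖_F² - ⟨Q,H⟩, with α̃, σ̃ > 0. Then any minimizer H* satisfies H* = (1/(α̃‖H*‖_F² + σ̃))·[Q - eνᵀ]₊ for some ν ∈ ℝⁿ, where [·]₊ denotes the entrywise positive part and e is the all-ones vector in ℝ^r. -/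
/-!
Moving a mass `s ∈ (0, H i j]` from entry `(i, j)` to entry `(i', j)` keeps every column of a
minimizer `H` in the simplex and changes the objective by `s · p(s)` with `p` a polynomial and
`p(0) = (c H i' j - Q i' j) - (c H i j - Q i j)`, where `c = α‖H‖² + σ` (this is the directional
derivative along `E_{i'j} - E_{ij}`). Hence on the support of each column, `c H - Q` attains its
minimum over the column; calling `-ν j` that minimum, `c H i j = max (Q i j - ν j) 0`.
-/

open Matrix Finset Filter

theorem nonneg_of_forall_mem_Ioc_nonneg {p : ℝ → ℝ} (hp : ContinuousWithinAt p (Set.Ioi 0) 0)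
    {ε : ℝ} (hε : 0 < ε) (h : ∀ s ∈ Set.Ioc 0 ε, 0 ≤ p s) : 0 ≤ p 0 :=
  ge_of_tendsto hp (eventually_of_mem (Ioc_mem_nhdsGT hε) h)

theorem exists_eq_one_div_mul_max_sub_zero {ι : Type*} [Finite ι] {x q : ι → ℝ} {c : ℝ}
    (hc : 0 < c) (hx : ∀ i, 0 ≤ x i)
    (hex : ∀ i, 0 < x i → ∀ i', c * x i - q i ≤ c * x i' - q i') :
    ∃ ν, ∀ i, x i = 1 / c * max (q i - ν) 0 := by
  refine ⟨⨆ i, (q i - c * x i), fun i => ?_⟩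
  have hle : q i - c * x i ≤ ⨆ i, (q i - c * x i) :=
    le_ciSup (Finite.bddAbove_range fun i => q i - c * x i) i
  obtain hzero | hpos := (hx i).eq_or_lt
  · rw [← hzero, mul_zero, sub_zero] at hle
    rw [← hzero, max_eq_right (by linarith), mul_zero]
  · have : Nonempty ι := ⟨i⟩
    have hge : ⨆ i, (q i - c * x i) ≤ q i - c * x i :=
      ciSup_le fun i' => by linarith [hex i hpos i']
    rw [le_antisymm hge hle, sub_sub_cancel, max_eq_left (by positivity)]
    field_simp

def colStdSimplex (m n : Type*) [Fintype m] : Set (Matrix m n ℝ) :=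
  {H | ∀ j, (fun i => H i j) ∈ stdSimplex ℝ m}

noncomputable def quarticObjective {m n : Type*} [Fintype m] [Fintype n] (α σ : ℝ)
    (Q H : Matrix m n ℝ) : ℝ :=
  α / 4 * (∑ i, ∑ j, H i j ^ 2) ^ 2 + σ / 2 * (∑ i, ∑ j, H i j ^ 2) - ∑ i, ∑ j, Q i j * H i j

variable {m n : Type*} [Fintype m] [DecidableEq m] [DecidableEq n]

theorem add_smul_single_sub_single_mem_colStdSimplex {H : Matrix m n ℝ}
    (hH : H ∈ colStdSimplex m n) {i i' : m} {j : n} {s : ℝ} (hs : 0 ≤ s) (hsH : s ≤ H i j) :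
    H + s • (single i' j 1 - single i j 1 : Matrix m n ℝ) ∈ colStdSimplex m n := by
  refine fun b => ⟨fun a => ?_, ?_⟩
  · by_cases hab : i = a ∧ j = b
    · obtain ⟨rfl, rfl⟩ := hab
      simp only [Matrix.add_apply, Matrix.smul_apply, Matrix.sub_apply, single_apply, and_self,
        if_true, smul_eq_mul]
      split_ifs <;> linarith
    · simp only [Matrix.add_apply, Matrix.smul_apply, Matrix.sub_apply, single_apply, hab,
        if_false, sub_zero, smul_eq_mul]
      split_ifs <;> linarith [(hH b).1 a]
  · simp [sum_add_distrib, mul_sub, sum_sub_distrib, single_apply, ite_and, (hH b).2]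

theorem sum_sum_mul_single_sub_single [Fintype n] (A : Matrix m n ℝ) (i i' : m) (j : n) :
    ∑ a, ∑ b, A a b * (single i' j 1 - single i j 1 : Matrix m n ℝ) a b = A i' j - A i j := by
  simp [single_apply, mul_sub, sum_sub_distrib, ite_and]

theorem quarticObjective_add_smul_single_sub_single [Fintype n] (α σ : ℝ) (Q H : Matrix m n ℝ)
    {i i' : m} (hi : i ≠ i') (j : n) (s : ℝ) :
    quarticObjective α σ Q (H + s • (single i' j 1 - single i j 1 : Matrix m n ℝ))
        - quarticObjective α σ Q H =
      s * (α * s * (H i' j - H i j + s) ^ 2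
        + (α * (∑ a, ∑ b, H a b ^ 2) + σ) * (H i' j - H i j + s) - (Q i' j - Q i j)) := by
  set D : Matrix m n ℝ := single i' j 1 - single i j 1
  have hHD : ∑ a, ∑ b, H a b * D a b = H i' j - H i j := sum_sum_mul_single_sub_single H i i' j
  have hQD : ∑ a, ∑ b, Q a b * D a b = Q i' j - Q i j := sum_sum_mul_single_sub_single Q i i' j
  have hDD : ∑ a, ∑ b, D a b * D a b = 2 := by
    rw [sum_sum_mul_single_sub_single]
    norm_num [D, hi, hi.symm]
  have hnorm : ∑ a, ∑ b, (H + s • D) a b ^ 2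
      = ∑ a, ∑ b, H a b ^ 2 + 2 * s * (H i' j - H i j) + s ^ 2 * 2 := by
    have hsq (a b) : (H + s • D) a b ^ 2
        = H a b ^ 2 + 2 * s * (H a b * D a b) + s ^ 2 * (D a b * D a b) := by
      simp only [Matrix.add_apply, Matrix.smul_apply, smul_eq_mul]; ring
    simp only [hsq, sum_add_distrib, ← mul_sum, hHD, hDD]
  have hlin : ∑ a, ∑ b, Q a b * (H + s • D) a b
      = ∑ a, ∑ b, Q a b * H a b + s * (Q i' j - Q i j) := by
    have hmul (a b) : Q a b * (H + s • D) a b = Q a b * H a b + s * (Q a b * D a b) := by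
      simp only [Matrix.add_apply, Matrix.smul_apply, smul_eq_mul]; ring
    simp only [hmul, sum_add_distrib, ← mul_sum, hQD]
  simp only [quarticObjective, hnorm, hlin]
  ring

theorem quarticObjective_exchange_le_of_isMinOn [Fintype n] {α σ : ℝ} {Q H : Matrix m n ℝ}
    (hmin : IsMinOn (quarticObjective α σ Q) (colStdSimplex m n) H)
    (hH : H ∈ colStdSimplex m n) {i : m} {j : n} (hpos : 0 < H i j) (i' : m) :
    (α * (∑ a, ∑ b, H a b ^ 2) + σ) * H i j - Q i j
      ≤ (α * (∑ a, ∑ b, H a b ^ 2) + σ) * H i' j - Q i' j := by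
  obtain rfl | hi := eq_or_ne i i'
  · rfl
  set c := α * (∑ a, ∑ b, H a b ^ 2) + σ
  set p : ℝ → ℝ := fun s =>
    α * s * (H i' j - H i j + s) ^ 2 + c * (H i' j - H i j + s) - (Q i' j - Q i j)
  have hp : 0 ≤ p 0 := by
    refine nonneg_of_forall_mem_Ioc_nonneg (by fun_prop) hpos fun s ⟨hs, hsH⟩ => ?_
    have hle := isMinOn_iff.1 hmin _
      (add_smul_single_sub_single_mem_colStdSimplex (i' := i') hH hs.le hsH)
    rw [← sub_nonneg, quarticObjective_add_smul_single_sub_single α σ Q H hi] at hle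
    exact nonneg_of_mul_nonneg_right hle hs
  simp only [p] at hp
  linarith

theorem stmt19 {r n : ℕ} (α σ : ℝ) (hα : 0 < α) (hσ : 0 < σ)
    (Q : Matrix (Fin r) (Fin n) ℝ)
    (t : Matrix (Fin r) (Fin n) ℝ → ℝ)
    (ht : ∀ H : Matrix (Fin r) (Fin n) ℝ,
      t H = (α / 4) * (∑ i, ∑ j, (H i j) ^ 2) ^ 2 + (σ / 2) * (∑ i, ∑ j, (H i j) ^ 2)
        - ∑ i, ∑ j, Q i j * H i j)
    (Hstar : Matrix (Fin r) (Fin n) ℝ)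
    (hfeas : ∀ j, (∀ i, 0 ≤ Hstar i j) ∧ ∑ i, Hstar i j = 1)
    (hmin : ∀ H : Matrix (Fin r) (Fin n) ℝ,
      (∀ j, (∀ i, 0 ≤ H i j) ∧ ∑ i, H i j = 1) → t Hstar ≤ t H) :
    ∃ ν : Fin n → ℝ, ∀ i j,
      Hstar i j = (1 / (α * (∑ i', ∑ j', (Hstar i' j') ^ 2) + σ)) * max (Q i j - ν j) 0 := by
  obtain rfl : t = quarticObjective α σ Q := funext ht
  have hc : 0 < α * (∑ i', ∑ j', Hstar i' j' ^ 2) + σ := by positivity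
  choose ν hν using fun j => exists_eq_one_div_mul_max_sub_zero hc (hfeas j).1
    fun i hpos => quarticObjective_exchange_le_of_isMinOn (isMinOn_iff.2 hmin) hfeas hpos
  exact ⟨ν, fun i j => hν j i⟩
end
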